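/- arXiv:2409.05507 — 2 statements merged into one kernel-verified Lean document; each statement's English description precedes it below -/
import Mathlib

section
/- Let V be a finite-dimensional complex inner product space with Hermitian inner product h, linear in the first argument; regard V as a real vector space and let j denote multiplication by i. Let 𝒥 be a unital Jordan operator system on V, i.e. an ℝ-linear subspace of the ℂ-linear endomorphisms of V all of whose members are self-adjoint, containing the identity, and with A ∘ A ∈ 𝒥 whenever A ∈ 𝒥. Let W be a real subspace of V, P := W ∩ jW, and S := (jW)^{⊥,Re h} (the orthogonal complement of jW with respect to Re h). Assume Im h(B s, s') = 0 for every B ∈ 𝒥 and all s, s' ∈ S. Let A ∈ 𝒥. If s₁, s₂ ∈ S and q ∈ P satisfy A(s₁ + i s₂ + q) = 0, then there exists q' ∈ P such that A(s₁ − i s₂ + q') = 0. -/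
variable {V : Type*} [NormedAddCommGroup V] [InnerProductSpace ℂ V] [FiniteDimensional ℂ V]

/-- Multiplication by `i` on `V`, seen as an ℝ-linear endomorphism `j`. -/
noncomputable def smulI : V →ₗ[ℝ] V where
  toFun v := Complex.I • v
  map_add' a b := smul_add _ a b
  map_smul' r v := by
    simp only [RingHom.id_apply]
    rw [smul_comm]

/-- A unital Jordan operator system on `V`: an ℝ-linear subspace of the ℂ-linear endomorphisms
of `V` all of whose members are self-adjoint, containing the identity, and closed under
squares. -/
structure IsJordanOperatorSystem (J : Set (V →ₗ[ℂ] V)) : Prop where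
  symm_mem : ∀ A ∈ J, LinearMap.IsSymmetric A
  id_mem : LinearMap.id ∈ J
  sq_mem : ∀ A ∈ J, A ∘ₗ A ∈ J
  add_mem : ∀ A ∈ J, ∀ B ∈ J, A + B ∈ J
  smul_mem : ∀ (r : ℝ), ∀ A ∈ J, r • A ∈ J

/-- The orthogonal complement `X^{⊥, g_B}` of a set of vectors `X` with respect to the real
bilinear form `g_B(v, w) = Re h(B v, w)`, where the Hermitian inner product `h` is linear in
the first argument and conjugate-linear in the second; in Mathlib's convention
`h (B v) w = inner w (B v)`. Note `g_{id} = Re h`. -/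
noncomputable def gperp (B : V →ₗ[ℂ] V) (X : Set V) : Submodule ℝ V where
  carrier := {v | ∀ x ∈ X, (inner ℂ x (B v) : ℂ).re = 0}
  zero_mem' := by intro x hx; simp
  add_mem' := by
    intro a b ha hb x hx
    simp only [map_add, inner_add_right, Complex.add_re, ha x hx, hb x hx, add_zero]
  smul_mem' := by
    intro r v hv x hx
    rw [LinearMap.map_smul_of_tower, ← Complex.coe_smul, inner_smul_right]
    simp [hv x hx]

/-!
Let `S = (jW)^⊥` and `P = W ∩ jW`. Then `P` is a complex subspace (`W.core ℂ`) whose Hermitian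
orthogonal complement is `S + iS`. Put `K = P + ker A`: it is a complex subspace containing
`s₁ + i s₂`, and `Kᗮ = Pᗮ ∩ range A`. The orthogonal projection onto `range A` is `A p(A)` for a
real polynomial `p`, and all powers of `A` lie in `𝒥` (polarization), so the projection is real
on `S`. This forces `x, y ∈ range A` whenever `x + iy ∈ range A` with `x, y ∈ S`. Hence every
vector of `Kᗮ` is `x + iy` with `x, y ∈ S ∩ Kᗮ`, and for such `x`,
`⟪x, s₁ - i s₂⟫ = conj ⟪x, s₁ + i s₂⟫ = 0`.
-/

open Complex ComplexConjugate Polynomial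

namespace Submodule

variable {R A M : Type*} [Semiring R] [Semiring A] [AddCommMonoid M] [Module R M] [Module A M]

variable (A) in
def core (W : Submodule R M) : Submodule A M where
  carrier := {v | ∀ c : A, c • v ∈ W}
  add_mem' hu hv c := by rw [smul_add]; exact W.add_mem (hu c) (hv c)
  zero_mem' c := by rw [smul_zero]; exact W.zero_mem
  smul_mem' c v hv d := by rw [smul_smul]; exact hv (d * c)

theorem mem_core {W : Submodule R M} {v : M} : v ∈ W.core A ↔ ∀ c : A, c • v ∈ W := Iff.rfl

end Submodule

theorem Submodule.orthogonal_inf {𝕜 F : Type*} [RCLike 𝕜] [NormedAddCommGroup F]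
    [InnerProductSpace 𝕜 F] [FiniteDimensional 𝕜 F] (K₁ K₂ : Submodule 𝕜 F) :
    (K₁ ⊓ K₂)ᗮ = K₁ᗮ ⊔ K₂ᗮ := by
  rw [← (K₁ᗮ ⊔ K₂ᗮ).orthogonal_orthogonal, ← Submodule.inf_orthogonal,
    K₁.orthogonal_orthogonal, K₂.orthogonal_orthogonal]

namespace IsJordanOperatorSystem

variable {E : Type*} [NormedAddCommGroup E] [InnerProductSpace ℂ E] {J : Set (E →ₗ[ℂ] E)}

def toSubmodule (hJ : IsJordanOperatorSystem J) : Submodule ℝ (E →ₗ[ℂ] E) where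
  carrier := J
  add_mem' ha hb := hJ.add_mem _ ha _ hb
  zero_mem' := by simpa using hJ.smul_mem 0 _ hJ.id_mem
  smul_mem' := hJ.smul_mem

theorem pow_succ_mem (hJ : IsJordanOperatorSystem J) {A : E →ₗ[ℂ] E} (hA : A ∈ J) (k : ℕ) :
    A ^ (k + 1) ∈ J := by
  induction k with
  | zero => simpa using hA
  | succ k ih =>
    have hsq : ∀ B ∈ J, B * B ∈ hJ.toSubmodule := hJ.sq_mem
    have hpolar : A ^ (k + 1 + 1) = (2⁻¹ : ℝ) • ((A + A ^ (k + 1)) * (A + A ^ (k + 1)) - A * A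
        - A ^ (k + 1) * A ^ (k + 1)) := by
      rw [add_mul, mul_add, mul_add, ← pow_succ', ← pow_succ]
      module
    rw [hpolar]
    exact hJ.toSubmodule.smul_mem _
      (sub_mem (sub_mem (hsq _ (hJ.add_mem _ hA _ ih)) (hsq _ hA)) (hsq _ ih))

end IsJordanOperatorSystem

section

variable {E : Type*} [NormedAddCommGroup E] [InnerProductSpace ℂ E]

theorem inner_sub_I_smul_eq_conj {x s₁ s₂ : E} (h₁ : (inner ℂ x s₁).im = 0)
    (h₂ : (inner ℂ x s₂).im = 0) :
    inner ℂ x (s₁ - I • s₂) = conj (inner ℂ x (s₁ + I • s₂)) := by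
  rw [inner_sub_right, inner_add_right, inner_smul_right, map_add, map_mul,
    conj_I, conj_eq_iff_im.2 h₁, conj_eq_iff_im.2 h₂]
  ring

section RealForm

variable {K : Submodule ℂ E} [K.HasOrthogonalProjection] {S : Set E}

theorem Submodule.sub_I_smul_mem_of_add_I_smul_mem
    (hS : ∀ s ∈ S, ∀ t ∈ S, (inner ℂ t s).im = 0)
    (hK : ∀ w ∈ Kᗮ, ∃ x ∈ S, ∃ y ∈ S, x ∈ Kᗮ ∧ y ∈ Kᗮ ∧ w = x + I • y)
    {s₁ s₂ : E} (hs₁ : s₁ ∈ S) (hs₂ : s₂ ∈ S) (h : s₁ + I • s₂ ∈ K) : s₁ - I • s₂ ∈ K := by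
  rw [← K.orthogonal_orthogonal]
  intro w hw
  obtain ⟨x, hxS, y, hyS, hx, hy, rfl⟩ := hK w hw
  rw [inner_add_left, inner_smul_left,
    inner_sub_I_smul_eq_conj (hS _ hs₁ _ hxS) (hS _ hs₂ _ hxS),
    inner_sub_I_smul_eq_conj (hS _ hs₁ _ hyS) (hS _ hs₂ _ hyS),
    K.inner_left_of_mem_orthogonal h hx, K.inner_left_of_mem_orthogonal h hy]
  simp

theorem Submodule.mem_of_add_I_smul_mem
    (hS : ∀ s ∈ S, ∀ t ∈ S, (inner ℂ t s).im = 0)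
    (hP : ∀ s ∈ S, ∀ t ∈ S, (inner ℂ t (K.starProjection s)).im = 0)
    {x y : E} (hx : x ∈ S) (hy : y ∈ S) (h : x + I • y ∈ K) : x ∈ K ∧ y ∈ K := by
  set u := x - K.starProjection x
  set v := y - K.starProjection y
  have huv : u = -(I • v) := by
    have := K.starProjection_eq_self_iff.mpr h
    simp only [map_add, map_smul] at this
    simp only [u, v, smul_sub]
    linear_combination (norm := module) -this
  have hu : inner ℂ u u = -I * (inner ℂ x y - inner ℂ x (K.starProjection y)) := by
    calc inner ℂ u u = inner ℂ x u - inner ℂ (K.starProjection x) u := inner_sub_left _ _ _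
      _ = inner ℂ x (-(I • v)) := by
        rw [K.inner_right_of_mem_orthogonal (K.starProjection_apply_mem x)
          (K.sub_starProjection_mem_orthogonal x), sub_zero, ← huv]
      _ = _ := by rw [inner_neg_right, inner_smul_right, inner_sub_right, neg_mul]
  -- `‖u‖² = ⟪x, u⟫ = -i ⟪x, v⟫` is both real and purely imaginary.
  have hu0 : u = 0 := by
    have hre : (inner ℂ u u).re = 0 := by
      rw [hu]
      simp [hS _ hy _ hx, hP _ hy _ hx]
    exact inner_self_eq_zero.mp (Complex.ext hre (inner_self_im (𝕜 := ℂ) u))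
  have hxK : x ∈ K := by
    rw [sub_eq_zero] at hu0
    exact hu0 ▸ K.starProjection_apply_mem x
  refine ⟨hxK, (K.smul_mem_iff I_ne_zero).mp ?_⟩
  simpa using K.sub_mem h hxK

end RealForm

section Polynomial

variable {A : E →ₗ[ℂ] E}

theorem im_inner_apply_aeval_eq_zero {s t : E}
    (h : ∀ k : ℕ, (inner ℂ t ((A ^ (k + 1)) s)).im = 0) (p : ℝ[X]) :
    (inner ℂ t (A (aeval A p s))).im = 0 := by
  induction p using Polynomial.induction_on' with
  | add p q hp hq => simp [hp, hq]
  | monomial n a =>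
    have hmono : A (aeval A (monomial n a) s) = (a : ℂ) • (A ^ (n + 1)) s := by
      rw [aeval_monomial, Algebra.algebraMap_eq_smul_one, smul_mul_assoc, one_mul,
        LinearMap.smul_apply, LinearMap.map_smul_of_tower, pow_succ', Module.End.mul_apply,
        Complex.coe_smul]
    rw [hmono, inner_smul_right, im_ofReal_mul, h n, mul_zero]

variable [FiniteDimensional ℂ E]

theorem LinearMap.IsSymmetric.exists_mul_mul_aeval_eq (hA : A.IsSymmetric) :
    ∃ p : ℝ[X], A * A * aeval A p = A := by
  classical
  have hn : Module.finrank ℂ E = Module.finrank ℂ E := rfl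
  set μ := hA.eigenvalues hn
  set b := hA.eigenvectorBasis hn
  -- `p` interpolates `x ↦ x⁻¹` on the spectrum; the junk value `0⁻¹ = 0` is harmless.
  set p : ℝ[X] := Lagrange.interpolate (Finset.univ.image μ) (fun x : ℝ => x) (fun x => x⁻¹)
  refine ⟨p, b.toBasis.ext fun i => ?_⟩
  have hμ : A (b i) = (μ i : ℂ) • b i := hA.apply_eigenvectorBasis hn i
  have heval : eval (μ i) p = (μ i)⁻¹ := Lagrange.eval_interpolate_at_node _
    (fun _ _ _ _ h => h) (Finset.mem_image_of_mem μ (Finset.mem_univ i))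
  have hp : aeval A p (b i) = ((μ i)⁻¹ : ℂ) • b i := by
    rw [← aeval_map_algebraMap ℂ, Module.End.aeval_apply_of_hasEigenvector
      (hA.hasEigenvector_eigenvectorBasis hn i), eval_map, ← coe_algebraMap, eval₂_at_apply,
      heval, map_inv₀]
  simp only [OrthonormalBasis.coe_toBasis, Module.End.mul_apply, hp, map_smul, hμ, smul_smul]
  by_cases h : (μ i : ℂ) = 0 <;> simp [h]

theorem LinearMap.IsSymmetric.exists_starProjection_range_eq (hA : A.IsSymmetric) :
    ∃ p : ℝ[X], ∀ v, (LinearMap.range A).starProjection v = A (aeval A p v) := by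
  obtain ⟨p, hp⟩ := hA.exists_mul_mul_aeval_eq
  refine ⟨p, fun v => Submodule.eq_starProjection_of_mem_orthogonal ⟨_, rfl⟩ ?_⟩
  rw [hA.orthogonal_range, LinearMap.mem_ker, map_sub, ← Module.End.mul_apply,
    ← Module.End.mul_apply, hp, sub_self]

end Polynomial

section RealInner

attribute [local instance] InnerProductSpace.complexToReal

@[simp] theorem smulI_apply (v : E) : smulI v = I • v := rfl

theorem gperp_id_eq_orthogonal (N : Submodule ℝ E) : gperp LinearMap.id (N : Set E) = Nᗮ := by
  ext v
  simp [gperp, Submodule.mem_orthogonal, real_inner_eq_re_inner]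

theorem Submodule.restrictScalars_orthogonal (K : Submodule ℂ E) :
    Kᗮ.restrictScalars ℝ = (K.restrictScalars ℝ)ᗮ := by
  ext v
  simp only [restrictScalars_mem, mem_orthogonal, real_inner_eq_re_inner]
  refine ⟨fun h u hu => by simp [h u hu], fun h u hu => Complex.ext (h u hu) ?_⟩
  simpa [inner_smul_left] using h _ (K.smul_mem I hu)

theorem Submodule.restrictScalars_core_eq (W : Submodule ℝ E) :
    (W.core ℂ).restrictScalars ℝ = W ⊓ W.map smulI := by
  ext v
  simp only [restrictScalars_mem, mem_core, mem_inf, mem_map, smulI_apply]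
  constructor
  · intro h
    refine ⟨by simpa using h 1, -I • v, h (-I), ?_⟩
    rw [smul_smul]
    simp
  · rintro ⟨hv, w, hw, rfl⟩ c
    have hc : c • I • w = c.re • I • w - c.im • w := by
      rw [← Complex.coe_smul, ← Complex.coe_smul]
      linear_combination (norm := module) (re_add_im c).symm • (I • w) + ((c.im : ℂ) * I_sq) • w
    rw [hc]
    exact W.sub_mem (W.smul_mem _ hv) (W.smul_mem _ hw)

variable [FiniteDimensional ℂ E]

theorem Submodule.restrictScalars_orthogonal_core (W : Submodule ℝ E) :
    ((W.core ℂ)ᗮ).restrictScalars ℝ = Wᗮ ⊔ (W.map smulI)ᗮ := by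
  rw [restrictScalars_orthogonal, restrictScalars_core_eq, orthogonal_inf]

theorem Submodule.exists_eq_add_I_smul_of_mem_orthogonal_core {W : Submodule ℝ E} {w : E}
    (hw : w ∈ (W.core ℂ)ᗮ) : ∃ x ∈ (W.map smulI)ᗮ, ∃ y ∈ (W.map smulI)ᗮ, w = x + I • y := by
  rw [← restrictScalars_mem ℝ, restrictScalars_orthogonal_core, mem_sup] at hw
  obtain ⟨a, ha, x, hx, rfl⟩ := hw
  refine ⟨x, hx, -I • a, ?_, ?_⟩
  · rintro _ ⟨u, hu, rfl⟩
    have hua := ha u hu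
    rw [real_inner_eq_re_inner] at hua ⊢
    simp [inner_smul_left, inner_smul_right, hua]
  · rw [smul_smul]
    simp [add_comm]

open Submodule in
theorem exists_eq_add_I_smul_of_mem_orthogonal_core_sup_ker {W : Submodule ℝ E}
    {A : E →ₗ[ℂ] E} (hA : A.IsSymmetric)
    (hS : ∀ s ∈ (W.map smulI)ᗮ, ∀ t ∈ (W.map smulI)ᗮ, (inner ℂ t s).im = 0)
    (hP : ∀ s ∈ (W.map smulI)ᗮ, ∀ t ∈ (W.map smulI)ᗮ,
      (inner ℂ t ((LinearMap.range A).starProjection s)).im = 0)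
    {w : E} (hw : w ∈ (W.core ℂ ⊔ LinearMap.ker A)ᗮ) :
    ∃ x ∈ (W.map smulI)ᗮ, ∃ y ∈ (W.map smulI)ᗮ,
      x ∈ (W.core ℂ ⊔ LinearMap.ker A)ᗮ ∧ y ∈ (W.core ℂ ⊔ LinearMap.ker A)ᗮ ∧ w = x + I • y := by
  rw [← inf_orthogonal, ← hA.orthogonal_range, orthogonal_orthogonal] at hw ⊢
  obtain ⟨x, hx, y, hy, rfl⟩ := exists_eq_add_I_smul_of_mem_orthogonal_core hw.1
  obtain ⟨hxR, hyR⟩ := (LinearMap.range A).mem_of_add_I_smul_mem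
    (S := (W.map smulI)ᗮ) hS hP hx hy hw.2
  have hSle : (W.map smulI)ᗮ ≤ ((W.core ℂ)ᗮ).restrictScalars ℝ :=
    le_sup_right.trans (restrictScalars_orthogonal_core W).ge
  exact ⟨x, hx, y, hy, ⟨hSle hx, hxR⟩, ⟨hSle hy, hyR⟩, rfl⟩

end RealInner

end

/-- Lemma 4.7 of the paper, operator form: with `P = W ∩ jW` and
`S = (jW)^{⊥, Re h}`, assuming `Im h(B s, s') = 0` for every `B ∈ 𝒥` and all `s, s' ∈ S`,
if `A ∈ 𝒥`, `s₁, s₂ ∈ S`, `q ∈ P` and `A (s₁ + i s₂ + q) = 0`, then some `q' ∈ P` satisfies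
`A (s₁ - i s₂ + q') = 0`. -/
theorem stmt4 (J : Set (V →ₗ[ℂ] V)) (hJ : IsJordanOperatorSystem J)
    (W : Submodule ℝ V)
    (hS : ∀ B ∈ J, ∀ s ∈ gperp LinearMap.id ((W.map smulI : Submodule ℝ V) : Set V),
      ∀ s' ∈ gperp LinearMap.id ((W.map smulI : Submodule ℝ V) : Set V),
        (inner ℂ s' (B s) : ℂ).im = 0)
    (A : V →ₗ[ℂ] V) (hA : A ∈ J)
    (s₁ s₂ : V)
    (hs₁ : s₁ ∈ gperp LinearMap.id ((W.map smulI : Submodule ℝ V) : Set V))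
    (hs₂ : s₂ ∈ gperp LinearMap.id ((W.map smulI : Submodule ℝ V) : Set V))
    (q : V) (hq : q ∈ W ⊓ W.map smulI)
    (h : A (s₁ + Complex.I • s₂ + q) = 0) :
    ∃ q' ∈ W ⊓ W.map smulI, A (s₁ - Complex.I • s₂ + q') = 0 := by
  let _ : InnerProductSpace ℝ V := InnerProductSpace.complexToReal
  rw [gperp_id_eq_orthogonal] at hS hs₁ hs₂
  have hsymm : A.IsSymmetric := hJ.symm_mem A hA
  have hSreal : ∀ s ∈ (W.map smulI)ᗮ, ∀ t ∈ (W.map smulI)ᗮ, (inner ℂ t s).im = 0 :=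
    fun s hs t ht => hS _ hJ.id_mem s hs t ht
  have hproj : ∀ s ∈ (W.map smulI)ᗮ, ∀ t ∈ (W.map smulI)ᗮ,
      (inner ℂ t ((LinearMap.range A).starProjection s)).im = 0 := by
    obtain ⟨p, hp⟩ := hsymm.exists_starProjection_range_eq
    intro s hs t ht
    rw [hp]
    exact im_inner_apply_aeval_eq_zero (fun k => hS _ (hJ.pow_succ_mem hA k) s hs t ht) p
  rw [← Submodule.restrictScalars_core_eq] at hq ⊢
  have hs : s₁ + I • s₂ ∈ W.core ℂ ⊔ LinearMap.ker A :=
    Submodule.mem_sup.mpr ⟨-q, neg_mem hq, _, h, by abel⟩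
  obtain ⟨p, hp, k, hk, hpk⟩ := Submodule.mem_sup.mp
    ((W.core ℂ ⊔ LinearMap.ker A).sub_I_smul_mem_of_add_I_smul_mem hSreal
      (fun _ => exists_eq_add_I_smul_of_mem_orthogonal_core_sup_ker hsymm hSreal hproj)
      hs₁ hs₂ hs)
  refine ⟨-p, neg_mem hp, ?_⟩
  rw [← hpk, add_neg_cancel_comm, hk]
end

section
/- Let V be a finite-dimensional complex inner product space with Hermitian inner product h, linear in the first argument; regard V as a real vector space and let j denote multiplication by i. For a self-adjoint ℂ-linear endomorphism A of V let g_A(v,w) = Re h(Av,w), and for a real subspace X let X^{⊥,g_A} = {v ∈ V : g_A(v,x) = 0 for all x ∈ X}. Let 𝒥 be a unital Jordan operator system on V, i.e. an ℝ-linear subspace of the ℂ-linear endomorphisms of V all of whose members are self-adjoint, containing the identity, and with A ∘ A ∈ 𝒥 whenever A ∈ 𝒥. Let W be a real subspace of V and S := (jW)^{⊥,Re h}. Assume Im h(B s, s') = 0 for every B ∈ 𝒥 and all s, s' ∈ S. Let A ∈ 𝒥 and assume in addition that every q ∈ W ∩ jW with Re h(Aq, q) = 0 lies in ker A. Then W =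 (W ∩ jW) + ((jW)^{⊥,g_A} ∩ W). -/
variable {V : Type*} [NormedAddCommGroup V] [InnerProductSpace ℂ V] [FiniteDimensional ℂ V]

/-!
Write `P = W ∩ jW` and `S = (jW)^⊥` for the real inner product `Re h`. Since
`Im h(B s, j u) = -Re h(B s, u)`, the hypothesis on `S` says that every operator of `𝒥`, in
particular every power of `A`, maps `S` into `(W^⊥)^⊥ = W`. Hence `S ⊆ W`, `W = P + S` and
`S = W ∩ P^⊥`, so with `p` the orthogonal projection onto `P` it suffices to find, for each
`s ∈ S`, some `q ∈ P` with `A q ∈ W` and `p (A q) = p (A s)`: then `A (s - q) ∈ S`.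
On the subspace `K` of those `q ∈ P` whose whole `A`-orbit stays in `W`, the compression `p A`
is a symmetric endomorphism. Its kernel lies in `ker A` by the hypothesis on `W ∩ jW`, and
`ker A` is orthogonal to `p (A s) ∈ K`, so `p (A s)` lies in the range of `p A` on `K`.
-/

open Submodule RealInnerProductSpace

section Invariant

variable {R M : Type*} [Semiring R] [AddCommMonoid M] [Module R M]

def largestInvariantSubmodule (A : Module.End R M) (W : Submodule R M) : Submodule R M :=
  ⨅ n : ℕ, W.comap (A ^ n)

variable {A : Module.End R M} {W : Submodule R M} {v : M}

theorem mem_largestInvariantSubmodule :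
    v ∈ largestInvariantSubmodule A W ↔ ∀ n : ℕ, (A ^ n) v ∈ W := by
  simp [largestInvariantSubmodule]

theorem largestInvariantSubmodule_le : largestInvariantSubmodule A W ≤ W := fun v hv ↦ by
  simpa using mem_largestInvariantSubmodule.mp hv 0

theorem apply_mem_largestInvariantSubmodule (hv : v ∈ largestInvariantSubmodule A W) :
    A v ∈ largestInvariantSubmodule A W :=
  mem_largestInvariantSubmodule.mpr fun n ↦ by
    simpa [pow_succ, Module.End.mul_apply] using mem_largestInvariantSubmodule.mp hv (n + 1)

end Invariant

theorem LinearMap.restrictScalars_pow_apply {R S M : Type*} [Semiring R] [Semiring S]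
    [AddCommMonoid M] [Module R M] [Module S M] [LinearMap.CompatibleSMul M M R S]
    (A : M →ₗ[S] M) (n : ℕ) (v : M) : (A.restrictScalars R ^ n) v = (A ^ n) v := by
  rw [Module.End.pow_apply, Module.End.pow_apply]
  rfl

section OrthogonalDecomposition

variable {𝕜 E : Type*} [RCLike 𝕜] [NormedAddCommGroup E] [InnerProductSpace 𝕜 E]
  [FiniteDimensional 𝕜 E] {W X : Submodule 𝕜 E}

theorem inf_sup_orthogonal_eq (hX : Xᗮ ≤ W) : (W ⊓ X) ⊔ Xᗮ = W := by
  rw [sup_comm, inf_comm]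
  simpa using sup_orthogonal_inf_of_hasOrthogonalProjection hX

theorem inf_orthogonal_inf_eq (hX : Xᗮ ≤ W) : W ⊓ (W ⊓ X)ᗮ = Xᗮ := by
  calc W ⊓ (W ⊓ X)ᗮ = (Xᗮ ⊔ W ⊓ X) ⊓ (W ⊓ X)ᗮ := by rw [sup_comm, inf_sup_orthogonal_eq hX]
    _ = Xᗮ := by
      rw [sup_inf_assoc_of_le _ (orthogonal_le inf_le_right), inf_orthogonal_eq_bot, sup_bot_eq]

theorem sub_starProjection_inf_mem_orthogonal (hX : Xᗮ ≤ W) {v : E} (hv : v ∈ W) :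
    v - (W ⊓ X).starProjection v ∈ Xᗮ := by
  rw [← inf_orthogonal_inf_eq hX]
  exact ⟨W.sub_mem hv (starProjection_apply_mem (W ⊓ X) v).1, sub_starProjection_mem_orthogonal v⟩

end OrthogonalDecomposition

section CompressedOperator

variable {E : Type*} [NormedAddCommGroup E] [InnerProductSpace ℝ E] [FiniteDimensional ℝ E]
  {W X : Submodule ℝ E} {A : E →ₗ[ℝ] E}

theorem starProjection_apply_mem_inf_largestInvariantSubmodule
    (hX : Xᗮ ≤ largestInvariantSubmodule A W) {v : E} (hv : v ∈ largestInvariantSubmodule A W) :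
    (W ⊓ X).starProjection v ∈ W ⊓ X ⊓ largestInvariantSubmodule A W := by
  refine ⟨starProjection_apply_mem _ _, ?_⟩
  rw [← sub_sub_cancel v ((W ⊓ X).starProjection v)]
  exact sub_mem hv <| hX <| sub_starProjection_inf_mem_orthogonal
    (hX.trans largestInvariantSubmodule_le) (largestInvariantSubmodule_le hv)

theorem LinearMap.IsSymmetric.range_eq_orthogonal_ker {F : Type*} [NormedAddCommGroup F]
    [InnerProductSpace ℝ F] [FiniteDimensional ℝ F] {T : F →ₗ[ℝ] F} (hT : T.IsSymmetric) :
    LinearMap.range T = (LinearMap.ker T)ᗮ := by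
  rw [T.orthogonal_ker, hT.adjoint_eq]

theorem exists_starProjection_apply_eq (hA : A.IsSymmetric)
    (hX : Xᗮ ≤ largestInvariantSubmodule A W)
    (hN : ∀ q ∈ W ⊓ X, ⟪q, A q⟫ = 0 → A q = 0) {s : E} (hs : s ∈ Xᗮ) :
    ∃ q ∈ W ⊓ X ⊓ largestInvariantSubmodule A W,
      (W ⊓ X).starProjection (A q) = (W ⊓ X).starProjection (A s) := by
  set P := W ⊓ X
  set K := P ⊓ largestInvariantSubmodule A W
  have hPp : ∀ q ∈ P, P.starProjection q = q := fun q hq ↦ starProjection_eq_self_iff.mpr hq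
  have hK : ∀ v ∈ K, (P.starProjection.toLinearMap ∘ₗ A) v ∈ K := fun v hv ↦
    starProjection_apply_mem_inf_largestInvariantSubmodule hX
      (apply_mem_largestInvariantSubmodule hv.2)
  set T := (P.starProjection.toLinearMap ∘ₗ A).restrict hK
  -- on `K ⊆ P`, the compression `p A` agrees with the symmetric operator `p A p`
  have hT : T.IsSymmetric := fun u v ↦ by
    change ⟪P.starProjection (A u), v⟫ = ⟪(u : E), P.starProjection (A v)⟫
    rw [inner_starProjection_left_eq_right, hPp v v.2.1, hA, ← inner_starProjection_left_eq_right,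
      hPp u u.2.1]
  have hx : P.starProjection (A s) ∈ K :=
    starProjection_apply_mem_inf_largestInvariantSubmodule hX
      (apply_mem_largestInvariantSubmodule (hX hs))
  have hker : ∀ k ∈ LinearMap.ker T, ⟪(k : E), P.starProjection (A s)⟫ = 0 := by
    intro k hk
    have hTk : P.starProjection (A k) = 0 := congrArg Subtype.val hk
    have hAk : A k = 0 := hN k k.2.1 <| by
      simpa [hPp k k.2.1, hTk] using inner_starProjection_left_eq_right P k (A k)
    rw [← inner_starProjection_left_eq_right, hPp k k.2.1, ← hA, hAk, inner_zero_left]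
  obtain ⟨q, hq⟩ : (⟨_, hx⟩ : K) ∈ LinearMap.range T := by
    rw [hT.range_eq_orthogonal_ker]
    exact fun k hk ↦ hker k hk
  exact ⟨q, q.2, congrArg ((↑) : K → E) hq⟩

theorem eq_inf_sup_comap_orthogonal_inf (hA : A.IsSymmetric)
    (hX : Xᗮ ≤ largestInvariantSubmodule A W)
    (hN : ∀ q ∈ W ⊓ X, ⟪q, A q⟫ = 0 → A q = 0) :
    W = (W ⊓ X) ⊔ (Xᗮ.comap A ⊓ W) := by
  have hXW : Xᗮ ≤ W := hX.trans largestInvariantSubmodule_le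
  refine le_antisymm ?_ (sup_le inf_le_left inf_le_right)
  conv_lhs => rw [← inf_sup_orthogonal_eq hXW]
  refine sup_le le_sup_left fun s hs ↦ ?_
  obtain ⟨q, ⟨hqP, hqL⟩, hpq⟩ := exists_starProjection_apply_eq hA hX hN hs
  have hAs := sub_starProjection_inf_mem_orthogonal hXW (largestInvariantSubmodule_le
    (apply_mem_largestInvariantSubmodule (hX hs)))
  have hAq := sub_starProjection_inf_mem_orthogonal hXW (largestInvariantSubmodule_le
    (apply_mem_largestInvariantSubmodule hqL))
  refine mem_sup.mpr ⟨q, hqP, s - q, ⟨?_, W.sub_mem (hXW hs) hqP.1⟩, add_sub_cancel _ _⟩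
  -- `A (s - q) = (A s - p A s) - (A q - p A q)` since `p A q = p A s`
  simpa [mem_comap, map_sub, hpq] using sub_mem hAs hAq

end CompressedOperator

section ComplexStructure

variable {U : Type*} [NormedAddCommGroup U] [InnerProductSpace ℂ U]

attribute [local instance] InnerProductSpace.complexToReal

theorem gperp_eq_comap_orthogonal (B : U →ₗ[ℂ] U) (K : Submodule ℝ U) :
    gperp B K = Kᗮ.comap (B.restrictScalars ℝ) :=
  rfl

theorem smul_I_mem_orthogonal_map_smulI {W : Submodule ℝ U} {u : U} (hu : u ∈ Wᗮ) :
    Complex.I • u ∈ (W.map smulI)ᗮ := by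
  rintro _ ⟨w, hw, rfl⟩
  simpa [smulI, real_inner_eq_re_inner, inner_smul_left, inner_smul_right] using hu w hw

theorem mem_of_forall_im_inner_eq_zero [FiniteDimensional ℂ U] {W : Submodule ℝ U} {v : U}
    (hv : ∀ s ∈ (W.map smulI)ᗮ, (inner ℂ s v).im = 0) : v ∈ W := by
  rw [← W.orthogonal_orthogonal]
  intro u hu
  simpa [real_inner_eq_re_inner, inner_smul_left] using hv _ (smul_I_mem_orthogonal_map_smulI hu)

end ComplexStructure

namespace IsJordanOperatorSystem

variable {U : Type*} [NormedAddCommGroup U] [InnerProductSpace ℂ U] {J : Set (U →ₗ[ℂ] U)}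

theorem mul_add_mul_mem (hJ : IsJordanOperatorSystem J) {A B : U →ₗ[ℂ] U} (hA : A ∈ J)
    (hB : B ∈ J) : A * B + B * A ∈ J := by
  have h := hJ.add_mem _ (hJ.add_mem _ (hJ.sq_mem _ (hJ.add_mem A hA B hB)) _
    (hJ.smul_mem (-1) _ (hJ.sq_mem A hA))) _ (hJ.smul_mem (-1) _ (hJ.sq_mem B hB))
  convert h using 1
  simp only [← Module.End.mul_eq_comp, neg_one_smul, add_mul, mul_add]
  abel

theorem pow_mem (hJ : IsJordanOperatorSystem J) {A : U →ₗ[ℂ] U} (hA : A ∈ J) :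
    ∀ n : ℕ, A ^ n ∈ J
  | 0 => by simpa [Module.End.one_eq_id] using hJ.id_mem
  | n + 1 => by
    have h := hJ.smul_mem (1 / 2) _ (hJ.mul_add_mul_mem hA (pow_mem hJ hA n))
    rwa [← pow_succ', ← pow_succ, ← two_smul ℝ, smul_smul, one_div,
      inv_mul_cancel₀ two_ne_zero, one_smul] at h

end IsJordanOperatorSystem

/-- Theorem 4.9 of the paper, operator form: with `S = (jW)^{⊥, Re h}`,
assuming `Im h(B s, s') = 0` for every `B ∈ 𝒥` and all `s, s' ∈ S`, if `A ∈ 𝒥` and every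
`q ∈ W ∩ jW` with `Re h(A q, q) = 0` lies in `ker A`, then
`W = (W ∩ jW) + ((jW)^{⊥, g_A} ∩ W)`. -/
theorem stmt6 (J : Set (V →ₗ[ℂ] V)) (hJ : IsJordanOperatorSystem J)
    (W : Submodule ℝ V)
    (hS : ∀ B ∈ J, ∀ s ∈ gperp LinearMap.id ((W.map smulI : Submodule ℝ V) : Set V),
      ∀ s' ∈ gperp LinearMap.id ((W.map smulI : Submodule ℝ V) : Set V),
        (inner ℂ s' (B s) : ℂ).im = 0)
    (A : V →ₗ[ℂ] V) (hA : A ∈ J)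
    (hN : ∀ q ∈ W ⊓ W.map smulI, (inner ℂ q (A q) : ℂ).re = 0 → A q = 0) :
    W = (W ⊓ W.map smulI) ⊔
        (gperp A ((W.map smulI : Submodule ℝ V) : Set V) ⊓ W) := by
  let _ : InnerProductSpace ℝ V := .complexToReal
  rw [gperp_eq_comap_orthogonal] at hS ⊢
  refine eq_inf_sup_comap_orthogonal_inf (hJ.symm_mem A hA).restrictScalars (fun s hs ↦ ?_) hN
  refine mem_largestInvariantSubmodule.mpr fun n ↦ ?_
  rw [LinearMap.restrictScalars_pow_apply]
  exact mem_of_forall_im_inner_eq_zero fun s' hs' ↦ hS _ (hJ.pow_mem hA n) s hs s' hs'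
end
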